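/- If 1<α<1.5, then there exists b₀ such that for every b>b₀, every strictly increasing sequence of positive integers n_1<n_2<⋯ (with n_0:=0), and every sequence (p_k)_{k≥1} of positive reals with Σ_{k≥1}p_k=1, the product ( Σ_{k≥1} P(n_{k-1}<τ_b≤n_k)²/p_k ) · ( Σ_{k≥1} p_k·n_k ) is infinite; in particular no such randomization can make the estimator's second moment and the expected termination time simultaneously finite. -/

import Mathlib

open MeasureTheory ProbabilityTheory Filter

noncomputable section

/-- Right tail `F̄(x) = F((x,∞))` of a measure on `ℝ`, as a real number. -/
def rtail (F : Measure ℝ) (x : ℝ) : ℝ := (F (Set.Ioi x)).toReal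

/-- `L` is slowly varying at infinity. -/
def SlowlyVarying (L : ℝ → ℝ) : Prop :=
  ∀ t > 0, Tendsto (fun x => L (t * x) / L x) atTop (nhds 1)

/-- The random walk `S_n = X_1 + ⋯ + X_n` (increments indexed from `1`). -/
def walk {Ω : Type*} (X : ℕ → Ω → ℝ) (n : ℕ) (ω : Ω) : ℝ :=
  ∑ i ∈ Finset.Icc 1 n, X i ω

/-- The event `{m₁ < τ_b ≤ m₂}`, where `τ_b = inf{n ≥ 1 : S_n − nμ > b}`. -/
def blockEvent {Ω : Type*} (X : ℕ → Ω → ℝ) (μ b : ℝ) (m₁ m₂ : ℕ) : Set Ω :=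
  {ω | ∃ m, m₁ < m ∧ m ≤ m₂ ∧ walk X m ω - m * μ > b ∧
    ∀ j, 1 ≤ j → j < m → walk X j ω - j * μ ≤ b}

/-!
Write `τ = τ_b` and `q_k = P(n_{k-1} < τ ≤ n_k)`. By AM–GM,
`q_k² / p_k + p_k n_k ≥ 2 q_k √n_k ≥ 2 ∑_{n_{k-1} < m ≤ n_k} P(τ = m) √m`,
so if both series were finite, so would be `∑_m P(τ = m) √m`.
On the other hand, by the strong law of large numbers, for large `b` the walk has, with
probability at least `1/2`, neither crossed `b + jμ` before time `n` nor dropped below `-nμ`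
at time `n`; a single jump `X_{n+1} > b + (2n + 1)μ` then makes `τ = n + 1`. Hence
`P(τ = m) ≳ F̄(Km) ≳ m^{-3/2}` for a constant `K` (this is where `α < 3/2` enters), and
`∑_m P(τ = m) √m ≳ ∑_m 1/m = ∞`.
-/

open Finset
open scoped ENNReal

-- `{τ_b = m}`
def hitAt {Ω : Type*} (X : ℕ → Ω → ℝ) (μ b : ℝ) (m : ℕ) : Set Ω :=
  {ω | walk X m ω - m * μ > b ∧ ∀ j, 1 ≤ j → j < m → walk X j ω - j * μ ≤ b}

-- `{τ_b > n, S_n ≥ -nμ}`: on it, one jump `X (n + 1) > b + (2n + 1)μ` forces `τ_b = n + 1`.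
def typicalEvent {Ω : Type*} (X : ℕ → Ω → ℝ) (μ b : ℝ) (n : ℕ) : Set Ω :=
  {ω | (∀ j, 1 ≤ j → j ≤ n → walk X j ω - j * μ ≤ b) ∧ -(μ * n) ≤ walk X n ω}

section Events

variable {Ω : Type*} {X : ℕ → Ω → ℝ} {μ b : ℝ}

lemma walk_succ (n : ℕ) (ω : Ω) : walk X (n + 1) ω = walk X n ω + X (n + 1) ω :=
  sum_Icc_succ_top (Nat.le_add_left 1 n) _

lemma pairwiseDisjoint_hitAt : (Set.Ici 1).PairwiseDisjoint (hitAt X μ b) := by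
  intro m hm m' hm' hne
  wlog hlt : m < m' generalizing m m'
  · exact (this hm' hm hne.symm (hne.lt_or_gt.resolve_left hlt)).symm
  exact Set.disjoint_left.2 fun ω hω hω' => (hω'.2 m hm hlt).not_gt hω.1

lemma blockEvent_eq_biUnion_hitAt (m₁ m₂ : ℕ) :
    blockEvent X μ b m₁ m₂ = ⋃ m ∈ Ioc m₁ m₂, hitAt X μ b m := by
  ext ω
  simp only [blockEvent, hitAt, Set.mem_iUnion, mem_Ioc, Set.mem_ofPred_eq, exists_prop]
  exact exists_congr fun m => by tauto

lemma typicalEvent_inter_subset_hitAt {n : ℕ} {t : ℝ} (ht : b + (2 * n + 1) * μ ≤ t) :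
    typicalEvent X μ b n ∩ X (n + 1) ⁻¹' Set.Ioi t ⊆ hitAt X μ b (n + 1) := by
  rintro ω ⟨⟨hbelow, hlow⟩, hjump⟩
  refine ⟨?_, fun j hj hjn => hbelow j hj (Nat.lt_succ_iff.1 hjn)⟩
  have hjump : t < X (n + 1) ω := hjump
  rw [walk_succ]
  push_cast
  linarith

lemma measurable_walk {m : MeasurableSpace Ω} {n : ℕ} (hX : ∀ i ≤ n, Measurable (X i)) :
    Measurable (walk X n) :=
  Finset.measurable_sum _ fun i hi => hX i (mem_Icc.1 hi).2

lemma measurableSet_hitAt {m : MeasurableSpace Ω} (hX : ∀ i, Measurable (X i)) (n : ℕ) :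
    MeasurableSet (hitAt X μ b n) := by
  have hwalk (j : ℕ) : Measurable fun ω => walk X j ω - j * μ :=
    (measurable_walk fun i _ => hX i).sub measurable_const
  refine measurableSet_setOfPred.2 <|
    (measurableSet_setOfPred.1 (measurableSet_lt measurable_const (hwalk n))).and <|
      .forall fun j => .imp measurable_const <| .imp measurable_const <|
        measurableSet_setOfPred.1 (measurableSet_le (hwalk j) measurable_const)

lemma measurableSet_typicalEvent {m : MeasurableSpace Ω} {n : ℕ}
    (hX : ∀ i ≤ n, Measurable (X i)) : MeasurableSet (typicalEvent X μ b n) := by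
  have hwalk (j : ℕ) (hj : j ≤ n) : Measurable fun ω => walk X j ω - j * μ :=
    (measurable_walk fun i hi => hX i (hi.trans hj)).sub measurable_const
  refine measurableSet_setOfPred.2 <| .and (.forall fun j => .imp measurable_const ?_) <|
    measurableSet_setOfPred.1 <| measurableSet_le measurable_const (measurable_walk hX)
  by_cases hj : j ≤ n
  · exact .imp measurable_const <|
      measurableSet_setOfPred.1 (measurableSet_le (hwalk j hj) measurable_const)
  · simp [hj]

end Events

lemma two_mul_mul_le_sq_div_add_mul_sq {p : ℝ} (hp : 0 < p) (q s : ℝ) :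
    2 * q * s ≤ q ^ 2 / p + p * s ^ 2 := by
  rw [div_add' _ _ _ hp.ne', le_div_iff₀ hp]
  nlinarith [sq_nonneg (q - p * s)]

lemma sum_Ioc_eq_sum_range_sum_Ioc {M : Type*} [AddCommMonoid M] (g : ℕ → M) {n : ℕ → ℕ}
    (hn : Monotone n) (K : ℕ) :
    ∑ m ∈ Ioc (n 0) (n K), g m = ∑ k ∈ range K, ∑ m ∈ Ioc (n k) (n (k + 1)), g m := by
  induction K with
  | zero => simp
  | succ K ih =>
    rw [sum_range_succ, ← ih, sum_Ioc_consecutive _ (hn K.zero_le) (hn K.le_succ)]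

lemma summable_of_sum_Ioc_le {g : ℕ → ℝ} (hg : ∀ m, 0 ≤ g m) {n : ℕ → ℕ}
    (hn : StrictMono n) {a : ℕ → ℝ} (ha : Summable a)
    (hblock : ∀ k, ∑ m ∈ Ioc (n k) (n (k + 1)), g m ≤ a k) :
    Summable g := by
  have ha0 : ∀ k, 0 ≤ a k := fun k => (sum_nonneg fun m _ => hg m).trans (hblock k)
  refine summable_of_sum_range_le hg (c := ∑ m ∈ range (n 0 + 1), g m + ∑' k, a k) fun K => ?_
  have hK : range K ⊆ range (n K + 1) := range_subset_range.2 (hn.le_apply.trans (n K).le_succ)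
  calc ∑ m ∈ range K, g m ≤ ∑ m ∈ range (n K + 1), g m :=
        sum_le_sum_of_subset_of_nonneg hK fun m _ _ => hg m
    _ = ∑ m ∈ range (n 0 + 1), g m +
          ∑ k ∈ range K, ∑ m ∈ Ioc (n k) (n (k + 1)), g m := by
        rw [← sum_range_add_sum_Ico _ (Nat.add_le_add_right (hn.monotone K.zero_le) 1),
          Ico_add_one_add_one_eq_Ioc, sum_Ioc_eq_sum_range_sum_Ioc g hn.monotone]
    _ ≤ ∑ m ∈ range (n 0 + 1), g m + ∑' k, a k := by
        gcongr
        exact (sum_le_sum fun k _ => hblock k).trans (ha.sum_le_tsum _ fun k _ => ha0 k)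

lemma exists_nat_bounds_of_tendsto_div {s : ℕ → ℝ} {μ : ℝ} (hμ : 0 < μ)
    (hs : Tendsto (fun n => s n / n) atTop (nhds 0)) :
    ∃ k : ℕ, ∀ m : ℕ, s m - m * μ ≤ k ∧ (k ≤ m → -(μ * m) ≤ s m) := by
  obtain ⟨N, hN⟩ := eventually_atTop.1 <|
    (hs.eventually (Ioo_mem_nhds (neg_neg_of_pos hμ) hμ)).and (eventually_gt_atTop 0)
  have hlin : ∀ m ≥ N, -(μ * m) ≤ s m ∧ s m ≤ μ * m := fun m hm => by
    obtain ⟨⟨hlo, hhi⟩, hm0⟩ := hN m hm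
    have hm0 : (0 : ℝ) < m := Nat.cast_pos.2 hm0
    rw [lt_div_iff₀ hm0] at hlo
    rw [div_lt_iff₀ hm0] at hhi
    constructor <;> linarith
  obtain ⟨c, hc⟩ := ((Set.finite_Iio N).image fun m => s m - m * μ).bddAbove
  refine ⟨max N ⌈c⌉₊, fun m => ⟨?_, fun hm => (hlin m (le_of_max_le_left hm)).1⟩⟩
  rcases lt_or_ge m N with hm | hm
  · calc s m - m * μ ≤ c := hc ⟨m, hm, rfl⟩
      _ ≤ ⌈c⌉₊ := Nat.le_ceil c
      _ ≤ (max N ⌈c⌉₊ : ℕ) := by exact_mod_cast le_max_right _ _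
  · have := (hlin m hm).2
    have : (0 : ℝ) ≤ (max N ⌈c⌉₊ : ℕ) := Nat.cast_nonneg _
    linarith

lemma tendsto_measure_of_ae_exists_mem {Ω : Type*} [MeasurableSpace Ω] {P : Measure Ω}
    [IsProbabilityMeasure P] {s : ℕ → Set Ω} (hs : Monotone s)
    (h : ∀ᵐ ω ∂P, ∃ k, ω ∈ s k) :
    Tendsto (fun k => P (s k)) atTop (nhds 1) := by
  have hfull : P (⋃ k, s k) = 1 := by
    rw [measure_congr (ae_eq_univ.2 ?_), measure_univ]
    exact measure_mono_null (fun ω hω => by simpa using hω) (ae_iff.1 h)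
  simpa [hfull, Function.comp_def] using tendsto_measure_iUnion_atTop (μ := P) hs

lemma SlowlyVarying.exists_pow_mul_le {L : ℝ → ℝ} (hL : SlowlyVarying L)
    (hLpos : ∀ x > 0, 0 < L x) {c : ℝ} (hc0 : 0 ≤ c) (hc1 : c < 1) :
    ∃ x₁ > 0, ∀ x ≥ x₁, ∀ k : ℕ, c ^ k * L x ≤ L (2 ^ k * x) := by
  obtain ⟨x₂, hx₂⟩ := eventually_atTop.1 ((hL 2 two_pos).eventually_const_lt hc1)
  have hstep (x : ℝ) (hx : max x₂ 1 ≤ x) : c * L x ≤ L (2 * x) := by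
    have hLx := hLpos x (by linarith [le_max_right x₂ 1])
    have := hx₂ x (le_of_max_le_left hx)
    rw [lt_div_iff₀ hLx] at this
    exact this.le
  refine ⟨max x₂ 1, by positivity, fun x hx k => ?_⟩
  induction k with
  | zero => simp
  | succ k ih =>
    have hx0 : 0 ≤ x := by linarith [le_max_right x₂ 1]
    have hxk : max x₂ 1 ≤ 2 ^ k * x :=
      hx.trans (le_mul_of_one_le_left hx0 (one_le_pow₀ one_le_two))
    calc c ^ (k + 1) * L x = c * (c ^ k * L x) := by ring
      _ ≤ c * L (2 ^ k * x) := by gcongr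
      _ ≤ L (2 * (2 ^ k * x)) := hstep _ hxk
      _ = L (2 ^ (k + 1) * x) := by rw [pow_succ, mul_comm _ 2, mul_assoc]

lemma exists_mul_rpow_le_of_antitone {f L : ℝ → ℝ} (hf : Antitone f) (hL : SlowlyVarying L)
    (hLpos : ∀ x > 0, 0 < L x) {α β : ℝ} (hαβ : α < β) (hβ : 0 ≤ β)
    (hfL : ∀ x > 0, f x = L x * x ^ (-α)) :
    ∃ C > 0, ∀ᶠ x in atTop, C * x ^ (-β) ≤ f x := by
  set c : ℝ := 2 ^ (α - β)
  have hc1 : c < 1 := Real.rpow_lt_one_of_one_lt_of_neg one_lt_two (by linarith)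
  obtain ⟨x₁, hx₁, hLx₁⟩ := hL.exists_pow_mul_le hLpos (by positivity) hc1
  have hLx₁0 := hLpos x₁ hx₁
  refine ⟨L x₁ * x₁ ^ (-α) * x₁ ^ β * 2 ^ (-β), by positivity,
    eventually_atTop.2 ⟨x₁, fun x hx => ?_⟩⟩
  have hx0 : 0 < x := hx₁.trans_le hx
  obtain ⟨k, hk, hk'⟩ := exists_nat_pow_near ((one_le_div hx₁).2 hx) one_lt_two
  set y : ℝ := 2 ^ (k + 1)
  have hy : 0 < y := by positivity
  have hyx : y ≤ 2 * x / x₁ := by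
    rw [show y = 2 * 2 ^ k from pow_succ' 2 k, mul_div_assoc]
    gcongr
  have hxy : x ≤ y * x₁ := by rw [div_lt_iff₀ hx₁] at hk'; exact hk'.le
  calc L x₁ * x₁ ^ (-α) * x₁ ^ β * 2 ^ (-β) * x ^ (-β)
      = L x₁ * x₁ ^ (-α) * (2 * x / x₁) ^ (-β) := by
        rw [Real.div_rpow (by positivity) hx₁.le, Real.mul_rpow zero_le_two hx0.le,
          Real.rpow_neg hx₁.le β]
        field_simp
    _ ≤ L x₁ * x₁ ^ (-α) * y ^ (-β) :=
        mul_le_mul_of_nonneg_left (Real.rpow_le_rpow_of_nonpos hy hyx (neg_nonpos.2 hβ))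
          (by positivity)
    _ = c ^ (k + 1) * L x₁ * (y * x₁) ^ (-α) := by
        rw [Real.rpow_pow_comm zero_le_two, Real.mul_rpow hy.le hx₁.le]
        have : y ^ (-β) = y ^ (α - β) * y ^ (-α) := by
          rw [← Real.rpow_add hy]; ring_nf
        rw [this]; ring
    _ ≤ L (y * x₁) * (y * x₁) ^ (-α) := by gcongr; exact hLx₁ x₁ le_rfl (k + 1)
    _ = f (y * x₁) := (hfL _ (by positivity)).symm
    _ ≤ f x := hf hxy

lemma rtail_antitone (F : Measure ℝ) [IsFiniteMeasure F] : Antitone (rtail F) :=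
  fun _ _ hxy => ENNReal.toReal_mono (measure_ne_top F _) (measure_mono (Set.Ioi_subset_Ioi hxy))

section Probability

variable {Ω : Type*} [MeasurableSpace Ω] {X : ℕ → Ω → ℝ} {μ b : ℝ}

lemma measure_blockEvent (P : Measure Ω) (hX : ∀ i, Measurable (X i)) (m₁ m₂ : ℕ) :
    P (blockEvent X μ b m₁ m₂) = ∑ m ∈ Ioc m₁ m₂, P (hitAt X μ b m) := by
  rw [blockEvent_eq_biUnion_hitAt]
  refine measure_biUnion_finset (pairwiseDisjoint_hitAt.subset fun m hm => ?_)
    fun m _ => measurableSet_hitAt hX m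
  exact Nat.one_le_iff_ne_zero.2 (mem_Ioc.1 hm).1.ne_bot

lemma summable_prob_hitAt_mul_sqrt (P : Measure Ω) [IsFiniteMeasure P]
    (hX : ∀ i, Measurable (X i)) {n : ℕ → ℕ} (hn : StrictMono n) {p : ℕ → ℝ}
    (hp : ∀ k, 0 < p (k + 1))
    (hvar : Summable fun k => (P (blockEvent X μ b (n k) (n (k + 1)))).toReal ^ 2 / p (k + 1))
    (htime : Summable fun k => p (k + 1) * (n (k + 1) : ℝ)) :
    Summable fun m => (P (hitAt X μ b m)).toReal * √m := by
  refine summable_of_sum_Ioc_le (fun m => by positivity) hn ((hvar.add htime).div_const 2)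
    fun k => ?_
  have hq : (P (blockEvent X μ b (n k) (n (k + 1)))).toReal =
      ∑ m ∈ Ioc (n k) (n (k + 1)), (P (hitAt X μ b m)).toReal := by
    rw [measure_blockEvent P hX, ENNReal.toReal_sum fun m _ => measure_ne_top P _]
  set q := (P (blockEvent X μ b (n k) (n (k + 1)))).toReal
  have hsqrt : √(n (k + 1) : ℝ) ^ 2 = n (k + 1) := Real.sq_sqrt (Nat.cast_nonneg _)
  calc ∑ m ∈ Ioc (n k) (n (k + 1)), (P (hitAt X μ b m)).toReal * √m
      ≤ ∑ m ∈ Ioc (n k) (n (k + 1)), (P (hitAt X μ b m)).toReal * √(n (k + 1) : ℝ) := by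
        gcongr with m hm
        exact_mod_cast (mem_Ioc.1 hm).2
    _ = q * √(n (k + 1) : ℝ) := by rw [hq, sum_mul]
    _ ≤ (q ^ 2 / p (k + 1) + p (k + 1) * n (k + 1)) / 2 := by
        have := two_mul_mul_le_sq_div_add_mul_sq (hp k) q √(n (k + 1) : ℝ)
        rw [hsqrt] at this
        linarith

lemma ae_tendsto_walk_div (P : Measure Ω) [IsProbabilityMeasure P] {F : Measure ℝ}
    (hX : ∀ i, Measurable (X i)) (hindep : iIndepFun X P) (hdist : ∀ i, P.map (X i) = F)
    (hmeanInt : Integrable (fun x => x) F) (hmean : ∫ x, x ∂F = 0) :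
    ∀ᵐ ω ∂P, Tendsto (fun n : ℕ => walk X n ω / n) atTop (nhds 0) := by
  have hident (i : ℕ) : IdentDistrib (X (i + 1)) (X 1) P P :=
    ⟨(hX _).aemeasurable, (hX _).aemeasurable, by rw [hdist, hdist]⟩
  have hint : Integrable (X 1) P := by
    have h : Integrable (fun x => x) (P.map (X 1)) := by rwa [hdist]
    exact (integrable_map_measure h.1 (hX 1).aemeasurable).1 h
  have hmean1 : P[X 1] = 0 := by
    rw [← hmean, ← hdist 1]
    exact (integral_map (f := fun x => x) (hX 1).aemeasurable aestronglyMeasurable_id).symm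
  have hslln := strong_law_ae_real (fun i => X (i + 1)) hint
    (fun i j hij => hindep.indepFun (by omega)) hident
  filter_upwards [hslln] with ω hω
  have hsum (n : ℕ) : ∑ i ∈ range n, X (i + 1) ω = walk X n ω := by
    rw [walk, range_eq_Ico, sum_Ico_add' (fun i => X i ω) 0 n 1, zero_add,
      Ico_add_one_right_eq_Icc]
  simpa [hsum, hmean1] using hω

lemma exists_prob_typicalEvent_gt (P : Measure Ω) [IsProbabilityMeasure P] {F : Measure ℝ}
    (hX : ∀ i, Measurable (X i)) (hindep : iIndepFun X P) (hdist : ∀ i, P.map (X i) = F)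
    (hmeanInt : Integrable (fun x => x) F) (hmean : ∫ x, x ∂F = 0) (hμ : 0 < μ) :
    ∃ k : ℕ, ∀ b ≥ (k : ℝ), ∀ n ≥ k, 1 / 2 < P (typicalEvent X μ b n) := by
  let s (k : ℕ) : Set Ω :=
    {ω | ∀ m : ℕ, walk X m ω - m * μ ≤ k ∧ (k ≤ m → -(μ * m) ≤ walk X m ω)}
  have hs : Monotone s := fun k k' hkk' ω hω m =>
    ⟨(hω m).1.trans (Nat.cast_le.2 hkk'), fun hm => (hω m).2 (hkk'.trans hm)⟩
  have hae : ∀ᵐ ω ∂P, ∃ k, ω ∈ s k :=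
    (ae_tendsto_walk_div P hX hindep hdist hmeanInt hmean).mono fun ω hω =>
      exists_nat_bounds_of_tendsto_div hμ hω
  obtain ⟨k, hk⟩ := ((tendsto_measure_of_ae_exists_mem hs hae).eventually
    (lt_mem_nhds (by norm_num : (1 / 2 : ℝ≥0∞) < 1))).exists
  refine ⟨k, fun b hb n hn => hk.trans_le (measure_mono fun ω hω => ⟨?_, (hω n).2 hn⟩)⟩
  exact fun j _ _ => (hω j).1.trans hb

lemma measure_typicalEvent_inter_eq_mul (P : Measure Ω) (hX : ∀ i, Measurable (X i))
    (hindep : iIndepFun X P) (n : ℕ) (s : Set ℝ) (hs : MeasurableSet s) :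
    P (typicalEvent X μ b n ∩ X (n + 1) ⁻¹' s)
      = P (typicalEvent X μ b n) * P (X (n + 1) ⁻¹' s) := by
  have hind := indep_iSup_of_disjoint (fun i => (hX i).comap_le)
    ((iIndepFun_iff_iIndep _ _ _).1 hindep)
    (Set.disjoint_singleton_right.2 (by simp) : Disjoint (Set.Iic n) {n + 1})
  refine (Indep_iff _ _ _).1 hind _ _ (measurableSet_typicalEvent fun i hi => ?_) ?_
  · exact (comap_measurable (X i)).mono
      (le_biSup (fun j => MeasurableSpace.comap (X j) _) hi) le_rfl
  · rw [_root_.iSup_singleton]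
    exact ⟨s, hs, rfl⟩

lemma measure_typicalEvent_mul_le_measure_hitAt (P : Measure Ω) {F : Measure ℝ}
    (hX : ∀ i, Measurable (X i)) (hindep : iIndepFun X P) (hdist : ∀ i, P.map (X i) = F)
    {n : ℕ} {t : ℝ} (ht : b + (2 * n + 1) * μ ≤ t) :
    P (typicalEvent X μ b n) * F (Set.Ioi t) ≤ P (hitAt X μ b (n + 1)) := by
  rw [← hdist (n + 1), Measure.map_apply (hX _) measurableSet_Ioi,
    ← measure_typicalEvent_inter_eq_mul P hX hindep n _ measurableSet_Ioi]
  exact measure_mono (typicalEvent_inter_subset_hitAt ht)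

lemma not_summable_prob_hitAt_mul_sqrt (P : Measure Ω) [IsProbabilityMeasure P]
    {F : Measure ℝ} [IsProbabilityMeasure F] (hX : ∀ i, Measurable (X i))
    (hindep : iIndepFun X P) (hdist : ∀ i, P.map (X i) = F) {α : ℝ} (hα : α < 3 / 2)
    {L : ℝ → ℝ} (hLpos : ∀ x > 0, 0 < L x) (hL : SlowlyVarying L)
    (htail : ∀ x > 0, rtail F x = L x * x ^ (-α)) (hμ : 0 < μ) (hb : 0 ≤ b) {N : ℕ}
    (htyp : ∀ n ≥ N, 1 / 2 < P (typicalEvent X μ b n)) :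
    ¬ Summable fun m => (P (hitAt X μ b m)).toReal * √m := by
  obtain ⟨C, hC, hCtail⟩ :=
    exists_mul_rpow_le_of_antitone (rtail_antitone F) hL hLpos hα (by norm_num) htail
  set K := b + 2 * μ
  have hK : 0 < K := by positivity
  set c := C * K ^ (-(3 / 2 : ℝ)) / 2
  have hlower : ∀ᶠ m : ℕ in atTop, c * (1 / m) ≤ (P (hitAt X μ b m)).toReal * √m := by
    filter_upwards [eventually_ge_atTop (N + 1),
      (tendsto_natCast_atTop_atTop.const_mul_atTop hK).eventually hCtail] with m hmN hm
    obtain ⟨n, rfl⟩ : ∃ n, m = n + 1 := ⟨m - 1, by omega⟩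
    set x : ℝ := ((n + 1 : ℕ) : ℝ) with hx
    have hx0 : 0 < x := by positivity
    have hjump := measure_typicalEvent_mul_le_measure_hitAt (μ := μ) (b := b) (n := n) P hX
      hindep hdist (t := K * x) (by rw [hx]; push_cast; nlinarith)
    have hhalf : (1 / 2 : ℝ) ≤ (P (typicalEvent X μ b n)).toReal := by
      simpa using ENNReal.toReal_mono (measure_ne_top P _) (htyp n (by omega)).le
    have hrpow : x ^ (-(3 / 2 : ℝ)) * √x = 1 / x := by
      rw [Real.sqrt_eq_rpow, ← Real.rpow_add hx0]
      norm_num [Real.rpow_neg_one]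
    calc c * (1 / x) = 1 / 2 * (C * (K * x) ^ (-(3 / 2 : ℝ))) * √x := by
          rw [Real.mul_rpow hK.le hx0.le, ← hrpow]; ring
      _ ≤ (P (typicalEvent X μ b n)).toReal * rtail F (K * x) * √x := by gcongr
      _ ≤ (P (hitAt X μ b (n + 1))).toReal * √x := by
          gcongr
          rw [rtail, ← ENNReal.toReal_mul]
          exact ENNReal.toReal_mono (measure_ne_top P _) hjump
  intro hsum
  refine Real.not_summable_one_div_natCast ((summable_mul_left_iff (a := c) (by positivity)).1 ?_)
  refine hsum.of_norm_bounded_eventually_nat (hlower.mono fun m hm => ?_)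
  rwa [Real.norm_of_nonneg (by positivity)]

end Probability

theorem stmt18_general
    {Ω : Type*} [MeasurableSpace Ω] (P : Measure Ω) [IsProbabilityMeasure P]
    (F : Measure ℝ) [IsProbabilityMeasure F]
    (X : ℕ → Ω → ℝ) (hXmeas : ∀ i, Measurable (X i))
    (hindep : iIndepFun X P)
    (hdist : ∀ i, Measure.map (X i) P = F)
    (α : ℝ) (hα2 : α < 3 / 2)
    (L : ℝ → ℝ) (hLpos : ∀ x > 0, 0 < L x) (hL : SlowlyVarying L)
    (htail : ∀ x > 0, rtail F x = L x * x ^ (-α))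
    (hmeanInt : Integrable (fun x => x) F) (hmean : ∫ x, x ∂F = 0)
    (μ : ℝ) (hμ : 0 < μ) :
    ∃ b₀ : ℝ, ∀ b > b₀,
      ∀ n : ℕ → ℕ, n 0 = 0 → StrictMono n →
      ∀ p : ℕ → ℝ, (∀ k : ℕ, 0 < p (k + 1)) → (∑' k : ℕ, p (k + 1)) = 1 →
      ¬ (Summable (fun k : ℕ =>
            (P (blockEvent X μ b (n k) (n (k + 1)))).toReal ^ 2 / p (k + 1)) ∧
         Summable (fun k : ℕ => p (k + 1) * (n (k + 1) : ℝ))) := by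
  obtain ⟨k, hk⟩ := exists_prob_typicalEvent_gt P hXmeas hindep hdist hmeanInt hmean hμ
  refine ⟨k, fun b hb n _ hn p hp _ ⟨hvar, htime⟩ => ?_⟩
  exact not_summable_prob_hitAt_mul_sqrt P hXmeas hindep hdist hα2 hLpos hL htail hμ
    ((Nat.cast_nonneg k).trans hb.le) (fun m hm => hk b hb.le m hm)
    (summable_prob_hitAt_mul_sqrt P hXmeas hn hp hvar htime)

/-- If `1 < α < 1.5`, then for all large `b`, no choice of blocks `0 = n_0 < n_1 < n_2 < ⋯`
and randomization probabilities `(p_k)_{k≥1}` (positive, summing to one) can make the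
second-moment series `Σ_k P(n_{k-1} < τ_b ≤ n_k)²/p_k` and the expected-termination-time
series `Σ_k p_k n_k` simultaneously finite. -/
theorem stmt18
    {Ω : Type*} [MeasurableSpace Ω] (P : Measure Ω) [IsProbabilityMeasure P]
    (F : Measure ℝ) [IsProbabilityMeasure F]
    (X : ℕ → Ω → ℝ) (hXmeas : ∀ i, Measurable (X i))
    (hindep : iIndepFun X P)
    (hdist : ∀ i, Measure.map (X i) P = F)
    (α : ℝ) (hα1 : 1 < α) (hα2 : α < 3 / 2)
    (L : ℝ → ℝ) (hLpos : ∀ x > 0, 0 < L x) (hL : SlowlyVarying L)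
    (htail : ∀ x > 0, rtail F x = L x * x ^ (-α))
    (hmeanInt : Integrable (fun x => x) F) (hmean : ∫ x, x ∂F = 0)
    (μ : ℝ) (hμ : 0 < μ) :
    ∃ b₀ : ℝ, ∀ b > b₀,
      ∀ n : ℕ → ℕ, n 0 = 0 → StrictMono n →
      ∀ p : ℕ → ℝ, (∀ k : ℕ, 0 < p (k + 1)) → (∑' k : ℕ, p (k + 1)) = 1 →
      ¬ (Summable (fun k : ℕ =>
            (P (blockEvent X μ b (n k) (n (k + 1)))).toReal ^ 2 / p (k + 1)) ∧
         Summable (fun k : ℕ => p (k + 1) * (n (k + 1) : ℝ))) :=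
  stmt18_general P F X hXmeas hindep hdist α hα2 L hLpos hL htail hmeanInt hmean μ hμ
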